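/- arXiv:2107.03885 — 3 statements merged into one kernel-verified Lean document; each statement's English description precedes it below -/
import Mathlib

section
/- For m, k, l, alpha with k <= n/4, l <= k, and alpha >= 4*k*l/n, the encoding length w(m,k,l,alpha) = log2(2 * 2^m * 2^alpha * C(n, k-alpha) * C(l, alpha)) satisfies w(m,k,l,alpha+1) <= w(m,k,l,alpha) - 1. -/
/-! Passing from `α` to `α + 1` multiplies `C(n, k-α)·C(l, α)` by
`(k-α)/(n-k+α+1) · (l-α)/(α+1)`. As `4kl ≤ αn` and `α ≤ k`,
`4(k-α)(l-α) = 4kl - 4α(k+l) + 4α² ≤ α(n-k+α)`, so this factor is at most `1/4`;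
with the extra factor `2` from `2^(α+1)`, the argument of `log₂` at least halves. -/

theorem Nat.mul_choose_mul_choose_succ_le {n j l a c : ℕ}
    (h : c * (j + 1) * (l - a) ≤ (n - j) * (a + 1)) :
    c * n.choose j * l.choose (a + 1) ≤ n.choose (j + 1) * l.choose a := by
  refine Nat.le_of_mul_le_mul_right ?_ (Nat.mul_pos j.succ_pos a.succ_pos)
  calc c * n.choose j * l.choose (a + 1) * ((j + 1) * (a + 1))
      = n.choose j * l.choose a * (c * (j + 1) * (l - a)) := by
        linear_combination c * (j + 1) * n.choose j * Nat.choose_succ_right_eq l a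
    _ ≤ n.choose j * l.choose a * ((n - j) * (a + 1)) := Nat.mul_le_mul_left _ h
    _ = n.choose (j + 1) * l.choose a * ((j + 1) * (a + 1)) := by
        linear_combination (a + 1) * l.choose a * (Nat.choose_succ_right_eq n j).symm

theorem four_mul_sub_mul_sub_le {n k l a : ℕ} (hal : a < l) (hlk : l ≤ k) (hkn : k ≤ n)
    (h : 4 * k * l ≤ a * n) :
    4 * (k - a) * (l - a) ≤ (n - (k - (a + 1))) * (a + 1) := by
  have hsub : n - (k - (a + 1)) = n - k + a + 1 := by omega
  rw [hsub]
  zify [hal.le, hal.le.trans hlk, hkn]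
  nlinarith

theorem four_mul_choose_mul_choose_le {n k l a : ℕ} (hal : a < l) (hlk : l ≤ k) (hkn : k ≤ n)
    (h : 4 * k * l ≤ a * n) :
    4 * n.choose (k - (a + 1)) * l.choose (a + 1) ≤ n.choose (k - a) * l.choose a := by
  have hk : k - (a + 1) + 1 = k - a := by omega
  rw [← hk]
  exact Nat.mul_choose_mul_choose_succ_le (by rw [hk]; exact four_mul_sub_mul_sub_le hal hlk hkn h)

theorem Real.logb_two_le_sub_one_of_two_mul_le {x y : ℝ} (hx : 0 < x) (h : 2 * x ≤ y) :
    Real.logb 2 x ≤ Real.logb 2 y - 1 := by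
  have h2x : Real.logb 2 (2 * x) = 1 + Real.logb 2 x := by
    rw [Real.logb_mul two_ne_zero hx.ne', Real.logb_self_eq_one one_lt_two]
  have := Real.logb_le_logb_of_le one_lt_two (by positivity) h
  linarith

theorem stmt3_general (n m k l a : ℕ) (hal : a < l) (hlk : l ≤ k) (hkn : 4 * k ≤ n)
    (halow : 4 * (k : ℝ) * l / n ≤ (a : ℝ)) :
    Real.logb 2 (2 * 2 ^ m * 2 ^ (a + 1) * (n.choose (k - (a + 1)) : ℝ) *
        (l.choose (a + 1) : ℝ))
      ≤ Real.logb 2 (2 * 2 ^ m * 2 ^ a * (n.choose (k - a) : ℝ) * (l.choose a : ℝ)) - 1 := by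
  have hn : (0 : ℝ) < n := by exact_mod_cast (show 0 < n by omega)
  have hkl : 4 * k * l ≤ a * n := by exact_mod_cast (div_le_iff₀ hn).mp halow
  have hkey : 4 * (n.choose (k - (a + 1)) : ℝ) * l.choose (a + 1)
      ≤ n.choose (k - a) * l.choose a := by
    exact_mod_cast four_mul_choose_mul_choose_le hal hlk (by omega) hkl
  have hC₁ : (0 : ℝ) < n.choose (k - (a + 1)) := by exact_mod_cast Nat.choose_pos (by omega)
  have hC₂ : (0 : ℝ) < l.choose (a + 1) := by exact_mod_cast Nat.choose_pos hal
  apply Real.logb_two_le_sub_one_of_two_mul_le (by positivity)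
  calc 2 * (2 * 2 ^ m * 2 ^ (a + 1) * (n.choose (k - (a + 1)) : ℝ) * l.choose (a + 1))
      = 2 * 2 ^ m * 2 ^ a * (4 * (n.choose (k - (a + 1)) : ℝ) * l.choose (a + 1)) := by ring
    _ ≤ 2 * 2 ^ m * 2 ^ a * (n.choose (k - a) * l.choose a) := by gcongr
    _ = _ := by ring

/-- For `k ≤ n/4`, `α < l ≤ k` and `α ≥ 4kl/n`, the encoding length
`w(m,k,l,α) = log₂(2·2^m·2^α·C(n,k-α)·C(l,α))` satisfies
`w(m,k,l,α+1) ≤ w(m,k,l,α) - 1`. -/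
theorem stmt3 (n m k l a : ℕ) (ha : 1 ≤ a) (hal : a < l) (hlk : l ≤ k) (hkn : 4 * k ≤ n)
    (halow : 4 * (k : ℝ) * l / n ≤ (a : ℝ)) :
    Real.logb 2 (2 * 2 ^ m * 2 ^ (a + 1) * (n.choose (k - (a + 1)) : ℝ) *
        (l.choose (a + 1) : ℝ))
      ≤ Real.logb 2 (2 * 2 ^ m * 2 ^ a * (n.choose (k - a) : ℝ) * (l.choose a : ℝ)) - 1 :=
  stmt3_general n m k l a hal hlk hkn halow
end

section
/- For k <= n/(8e), l <= k, and alpha >= max(8*e*k*l/n, m), the encoding length log2(2 * 2^m * 2^alpha * C(n, k-alpha) * C(l, alpha)) is strictly less than log2 C(n, k). -/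
/-!
Removing `α` elements from a `k`-set costs a factor at most `(k / (n - k + 1))^α` in `C(n, ·)`,
while `C(l, α) ≤ (e l / α)^α / e`. With `α ≥ 8ekl/n` and `2k ≤ n` the product
`2^α · C(l, α) · (k / (n - k + 1))^α` is at most `(n / (4(n - k + 1)))^α / e ≤ 2^{-α} / e`,
which absorbs the remaining factor `2^{m+1} ≤ 2^{α+1}` since `2 < e`.
-/

open Nat Real

namespace Nat

theorem choose_mul_sub_add_one_le {n i k : ℕ} (hik : i < k) (hkn : k ≤ n) :
    n.choose i * (n - k + 1) ≤ n.choose (i + 1) * k :=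
  calc n.choose i * (n - k + 1)
      ≤ n.choose i * (n - i) := Nat.mul_le_mul_left _ (by omega)
    _ = n.choose (i + 1) * (i + 1) := (choose_succ_right_eq n i).symm
    _ ≤ n.choose (i + 1) * k := Nat.mul_le_mul_left _ hik

theorem choose_sub_mul_pow_le {n k j : ℕ} (hjk : j ≤ k) (hkn : k ≤ n) :
    n.choose (k - j) * (n - k + 1) ^ j ≤ n.choose k * k ^ j := by
  induction j with
  | zero => simp
  | succ j ih =>
    have hstep := choose_mul_sub_add_one_le (i := k - (j + 1)) (by omega) hkn
    rw [show k - (j + 1) + 1 = k - j by omega] at hstep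
    calc n.choose (k - (j + 1)) * (n - k + 1) ^ (j + 1)
        = n.choose (k - (j + 1)) * (n - k + 1) * (n - k + 1) ^ j := by ring
      _ ≤ n.choose (k - j) * k * (n - k + 1) ^ j := Nat.mul_le_mul_right _ hstep
      _ = k * (n.choose (k - j) * (n - k + 1) ^ j) := by ring
      _ ≤ k * (n.choose k * k ^ j) := Nat.mul_le_mul_left _ (ih (by omega))
      _ = n.choose k * k ^ (j + 1) := by ring

end Nat

namespace Real

theorem add_one_pow_le_factorial_mul_exp_one_pow (n : ℕ) :
    ((n : ℝ) + 1) ^ n ≤ n ! * exp 1 ^ n := by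
  induction n with
  | zero => simp
  | succ n ih =>
    have hratio : ((n : ℝ) + 1 + 1) ^ (n + 1) ≤ ((n : ℝ) + 1) ^ (n + 1) * exp 1 := by
      have h := one_add_inv_pow_le_exp (n := n + 1)
      push_cast at h
      calc ((n : ℝ) + 1 + 1) ^ (n + 1)
          = ((n : ℝ) + 1) ^ (n + 1) * (1 + ((n : ℝ) + 1)⁻¹) ^ (n + 1) := by
            rw [← mul_pow]; field_simp
        _ ≤ ((n : ℝ) + 1) ^ (n + 1) * exp 1 := by gcongr
    calc (((n + 1 : ℕ) : ℝ) + 1) ^ (n + 1)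
        ≤ ((n : ℝ) + 1) * ((n : ℝ) + 1) ^ n * exp 1 := by
          push_cast; convert hratio using 2; ring
      _ ≤ ((n : ℝ) + 1) * (n ! * exp 1 ^ n) * exp 1 := by gcongr
      _ = ((n + 1)! : ℕ) * exp 1 ^ (n + 1) := by push_cast [factorial_succ]; ring

theorem pow_mul_exp_one_le_factorial_mul {a : ℕ} (ha : a ≠ 0) :
    (a : ℝ) ^ a * exp 1 ≤ a ! * exp 1 ^ a := by
  obtain ⟨b, rfl⟩ := Nat.exists_eq_succ_of_ne_zero ha
  calc ((b + 1 : ℕ) : ℝ) ^ (b + 1) * exp 1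
      = ((b : ℝ) + 1) * ((b : ℝ) + 1) ^ b * exp 1 := by push_cast; ring
    _ ≤ ((b : ℝ) + 1) * (b ! * exp 1 ^ b) * exp 1 := by
        gcongr; exact add_one_pow_le_factorial_mul_exp_one_pow b
    _ = ((b + 1)! : ℕ) * exp 1 ^ (b + 1) := by push_cast [factorial_succ]; ring

theorem choose_mul_pow_mul_exp_one_le {l a : ℕ} {c x : ℝ} (ha : a ≠ 0) (hc : 0 ≤ c)
    (hcx : exp 1 * l * c ≤ a * x) :
    (l.choose a : ℝ) * c ^ a * exp 1 ≤ x ^ a := by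
  have hfac : (0 : ℝ) < a ! := by exact_mod_cast a.factorial_pos
  have hapow : (0 : ℝ) < (a : ℝ) ^ a := by positivity
  have hchoose : (l.choose a : ℝ) * a ! ≤ (l : ℝ) ^ a := by
    have := Nat.choose_le_pow_div (α := ℝ) a l
    rwa [le_div_iff₀ hfac] at this
  refine le_of_mul_le_mul_left ?_ (mul_pos hapow (pow_pos (exp_pos 1) a))
  calc (a : ℝ) ^ a * exp 1 ^ a * ((l.choose a : ℝ) * c ^ a * exp 1)
      = (l.choose a : ℝ) * c ^ a * exp 1 ^ a * ((a : ℝ) ^ a * exp 1) := by ring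
    _ ≤ (l.choose a : ℝ) * c ^ a * exp 1 ^ a * (a ! * exp 1 ^ a) :=
        mul_le_mul_of_nonneg_left (pow_mul_exp_one_le_factorial_mul ha) (by positivity)
    _ = exp 1 ^ a * ((l.choose a : ℝ) * a ! * (exp 1 * c) ^ a) := by ring
    _ ≤ exp 1 ^ a * ((l : ℝ) ^ a * (exp 1 * c) ^ a) := by gcongr
    _ = exp 1 ^ a * (exp 1 * l * c) ^ a := by ring
    _ ≤ exp 1 ^ a * (a * x) ^ a := by gcongr
    _ = (a : ℝ) ^ a * exp 1 ^ a * x ^ a := by ring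

end Real

/-- For `k ≤ n/(8e)`, `α ≤ l ≤ k`, `α ≥ 8ekl/n` and `α ≥ m`, the encoding length
`log₂(2·2^m·2^α·C(n,k-α)·C(l,α))` is strictly less than `log₂ C(n,k)`; equivalently
`C(n,k) > 2^{m+1}·2^α·C(n,k-α)·C(l,α)`. -/
theorem stmt4 (n m k l a : ℕ) (ha : 1 ≤ a) (hal : a ≤ l) (hlk : l ≤ k)
    (hkn : (k : ℝ) ≤ (n : ℝ) / (8 * Real.exp 1))
    (halow : 8 * Real.exp 1 * k * l / n ≤ (a : ℝ)) (ham : m ≤ a) :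
    (2 : ℝ) ^ (m + 1) * 2 ^ a * (n.choose (k - a) : ℝ) * (l.choose a : ℝ)
      < (n.choose k : ℝ) := by
  have he := exp_one_gt_two
  have h8ek : 8 * exp 1 * k ≤ n := by rwa [le_div_iff₀ (by positivity), mul_comm] at hkn
  have hn : (0 : ℝ) < n := by
    have : (1 : ℝ) ≤ k := by exact_mod_cast ha.trans (hal.trans hlk)
    nlinarith
  have hkn' : k ≤ n := by exact_mod_cast (show (k : ℝ) ≤ n by nlinarith)
  have hremove : (n.choose (k - a) : ℝ) * ((n : ℝ) - k + 1) ^ a ≤ n.choose k * (k : ℝ) ^ a :=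
    mod_cast Nat.choose_sub_mul_pow_le (hal.trans hlk) hkn'
  have hchoose : (l.choose a : ℝ) * (8 * k) ^ a * exp 1 ≤ (n : ℝ) ^ a :=
    choose_mul_pow_mul_exp_one_le (by omega) (by positivity) (by
      rw [div_le_iff₀ hn] at halow; linarith)
  have hpow : (2 : ℝ) * (4 * n) ^ a < exp 1 * (8 * ((n : ℝ) - k + 1)) ^ a :=
    calc (2 : ℝ) * (4 * n) ^ a < exp 1 * (4 * n) ^ a := by gcongr
      _ ≤ exp 1 * (8 * ((n : ℝ) - k + 1)) ^ a := by
        gcongr exp 1 * ?_ ^ a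
        nlinarith [k.cast_nonneg (α := ℝ)]
  have hA : (0 : ℝ) < n.choose (k - a) := by exact_mod_cast Nat.choose_pos (by omega)
  refine lt_of_mul_lt_mul_right (a := (8 * (k : ℝ)) ^ a * exp 1) ?_ (by positivity)
  calc (2 : ℝ) ^ (m + 1) * 2 ^ a * n.choose (k - a) * l.choose a * ((8 * k) ^ a * exp 1)
      = 2 ^ (m + 1) * 2 ^ a * n.choose (k - a) * (l.choose a * (8 * k) ^ a * exp 1) := by ring
    _ ≤ 2 ^ (a + 1) * 2 ^ a * n.choose (k - a) * n ^ a := by gcongr; norm_num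
    _ = n.choose (k - a) * (2 * (4 * n) ^ a) := by
        rw [mul_pow, show (4 : ℝ) = 2 * 2 by norm_num, mul_pow]; ring
    _ < n.choose (k - a) * (exp 1 * (8 * ((n : ℝ) - k + 1)) ^ a) := by gcongr
    _ = exp 1 * 8 ^ a * (n.choose (k - a) * ((n : ℝ) - k + 1) ^ a) := by rw [mul_pow]; ring
    _ ≤ exp 1 * 8 ^ a * (n.choose k * (k : ℝ) ^ a) := by gcongr
    _ = n.choose k * ((8 * k) ^ a * exp 1) := by ring
end

section
/- If at each of n turns a guesser guesses a card uniformly from a fixed set A of size m of which none have been drawn yet (i.e., subset guessing against a uniformly shuffled deck), the expected number of correct guesses is H_m = sum_{j=1}^m 1/j. -/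
/-!
For a fixed shuffle `π`, list the turns at which a card of `A` is drawn in increasing order:
at the `i`-th of them exactly `m - i + 1` cards of `A` remain, so the guesser's success
probabilities along one shuffle are `1/m, 1/(m-1), …, 1/1` in that order. The sum is therefore
`H_m` for every shuffle, and so is its average.
-/

open Finset

theorem Finset.sum_card_filter_le {α M : Type*} [LinearOrder α] [AddCommMonoid M]
    (s : Finset α) (f : ℕ → M) :
    ∑ t ∈ s, f #{j ∈ s | t ≤ j} = ∑ k ∈ Icc 1 #s, f k := by
  induction s using Finset.induction_on_min with
  | empty => simp
  | insert a s ha ih =>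
    have ha_notMem : a ∉ s := fun h => lt_irrefl a (ha a h)
    have h_top : #{j ∈ insert a s | a ≤ j} = #s + 1 := by
      rw [filter_true_of_mem fun j hj => ?_, card_insert_of_notMem ha_notMem]
      rcases mem_insert.mp hj with rfl | hj
      exacts [le_rfl, (ha j hj).le]
    have h_rest (t : α) (ht : t ∈ s) : #{j ∈ insert a s | t ≤ j} = #{j ∈ s | t ≤ j} := by
      rw [filter_insert, if_neg (ha t ht).not_ge]
    rw [sum_insert ha_notMem, h_top, sum_congr rfl fun t ht => by rw [h_rest t ht], ih,
      card_insert_of_notMem ha_notMem, sum_Icc_succ_top (by omega), add_comm]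

theorem Equiv.Perm.card_filter_val_lt {n m : ℕ} (π : Equiv.Perm (Fin n)) (hmn : m ≤ n) :
    #{t | (π t).val < m} = m := by
  rw [card_equiv π (t := {c : Fin n | c.val < m}) fun t => by simp,
    Fin.card_filter_val_lt, min_eq_right hmn]

theorem stmt15_general (n m : ℕ) (hmn : m ≤ n) :
    (∑ π : Equiv.Perm (Fin n), ∑ t : Fin n,
        (if (π t).val < m then
          (1 : ℝ) / ((Finset.univ.filter fun j : Fin n => t ≤ j ∧ (π j).val < m).card : ℝ)
        else 0))
      / (Fintype.card (Equiv.Perm (Fin n)) : ℝ)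
    = ∑ j ∈ Finset.Icc 1 m, 1 / (j : ℝ) := by
  have h_shuffle (π : Equiv.Perm (Fin n)) :
      ∑ t : Fin n, (if (π t).val < m then
          (1 : ℝ) / (#{j | t ≤ j ∧ (π j).val < m} : ℝ) else 0)
        = ∑ j ∈ Icc 1 m, 1 / (j : ℝ) := by
    set S : Finset (Fin n) := {t | (π t).val < m}
    have h_remaining (t : Fin n) :
        ({j | t ≤ j ∧ (π j).val < m} : Finset (Fin n)) = {j ∈ S | t ≤ j} := by
      rw [filter_filter]; simp only [and_comm]
    simp only [← sum_filter, h_remaining]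
    rw [sum_card_filter_le S fun k => 1 / (k : ℝ), π.card_filter_val_lt hmn]
  rw [sum_congr rfl fun π _ => h_shuffle π, sum_const, card_univ, nsmul_eq_mul]
  exact mul_div_cancel_left₀ _ (Nat.cast_ne_zero.mpr Fintype.card_ne_zero)

/-- Subset guessing: a deck of `n` distinct cards is drawn in a uniformly random order
(card drawn at turn `t` is `π t`); the guesser fixes the subset `A = {c : c < m}` and
at each turn guesses uniformly at random among the cards of `A` not yet drawn.
The probability of a correct guess at turn `t` is `1/#{remaining cards of A}` if the
drawn card lies in `A`, and `0` otherwise. The expected total number of correct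
guesses equals `H_m = ∑_{j=1}^m 1/j`. -/
theorem stmt15 (n m : ℕ) (hm : 0 < m) (hmn : m ≤ n) :
    (∑ π : Equiv.Perm (Fin n), ∑ t : Fin n,
        (if (π t).val < m then
          (1 : ℝ) / ((Finset.univ.filter fun j : Fin n => t ≤ j ∧ (π j).val < m).card : ℝ)
        else 0))
      / (Fintype.card (Equiv.Perm (Fin n)) : ℝ)
    = ∑ j ∈ Finset.Icc 1 m, 1 / (j : ℝ) :=
  stmt15_general n m hmn
end
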